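/- Let f₁, f₂ ∈ L²(𝕋;ℂ) satisfy the four orthogonality conditions ∫₀^{2π} f₁(x) dx = 0, ∫₀^{2π} f₂(x) dx = 0, ∫₀^{2π} (−f₁(x)·sin x + f₂(x)·cos x) dx = 0 and ∫₀^{2π} (f₁(x)·cos x + f₂(x)·sin x) dx = 0. Then there exist v₁, v₂ ∈ H¹(𝕋;ℂ) such that v₁′ + |D|v₂ = f₁ and −v₁ + (1/2π)∫₀^{2π} v₁(x) dx + v₂′ = f₂ in L²(𝕋;ℂ). -/

import Mathlib

open MeasureTheory Complex Filter Set

noncomputable section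

/-- 2π-periodicity. -/
def Per (f : ℝ → ℂ) : Prop := Function.Periodic f (2 * Real.pi)

/-- k-th Fourier coefficient of a 2π-periodic function. -/
def fc (f : ℝ → ℂ) (k : ℤ) : ℂ :=
  ∫ x in (0:ℝ)..(2 * Real.pi), Complex.exp (-Complex.I * (k : ℂ) * (x : ℂ)) * f x

/-- Membership in L²(𝕋;ℂ). -/
def MemL2 (f : ℝ → ℂ) : Prop :=
  Per f ∧ MemLp f 2 (volume.restrict (Set.Ioc (0:ℝ) (2 * Real.pi)))

/-- Equality in L²(𝕋;ℂ): almost-everywhere equality. -/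
def aeEq (f g : ℝ → ℂ) : Prop := f =ᵐ[volume] g

/-- `f ∈ H¹(𝕋;ℂ)` with (weak) derivative `g`. -/
def IsH1 (f g : ℝ → ℂ) : Prop :=
  Per f ∧ Per g ∧ MemL2 g ∧ ∀ x : ℝ, f x = f 0 + ∫ t in (0:ℝ)..x, g t

/-- `h = m(D) f`. -/
def IsMult (m : ℤ → ℝ) (f h : ℝ → ℂ) : Prop :=
  MemL2 h ∧ ∀ k : ℤ, fc h k = (m k : ℂ) * fc f k

/-!
On the Fourier side the system decouples: for `k ≠ 0` it reads `i k V₁ + |k| V₂ = f̂₁(k)`,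
`-V₁ + i k V₂ = f̂₂(k)` (the mean of `v₁` only enters the mode `k = 0`), with determinant
`|k| (1 - |k|)`. For `|k| ≥ 2` the unique solution has `|k V₁| ≤ 2 (|f̂₁(k)| + |f̂₂(k)|)`, so
`v₁' ∈ L²`; for `|k| = 1` the orthogonality conditions say exactly `f̂₁(k) + i k f̂₂(k) = 0`,
so that `V₁ = 0` works; at `k = 0` everything vanishes by the mean-zero conditions. So one
prescribes the coefficients of `g₁ = v₁'`, realises them by an `L²` function through the Fourier
basis of `L²(AddCircle (2π))`, lets `v₁` be its primitive, `g₂ = f₂ + v₁ - mean v₁`, `v₂` the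
primitive of `g₂` and `h = f₁ - g₁`. The Fourier coefficients of a primitive follow from Fubini.
-/

open Real

instance : Fact (0 < 2 * π) := ⟨two_pi_pos⟩

lemma MemL2.intervalIntegrable {f : ℝ → ℂ} (hf : MemL2 f) (a b : ℝ) :
    IntervalIntegrable f volume a b :=
  hf.1.intervalIntegrable₀ two_pi_pos.ne'
    ((intervalIntegrable_iff_integrableOn_Ioc_of_le two_pi_pos.le).2 (hf.2.integrable one_le_two))
    a b

lemma MemL2.add {f g : ℝ → ℂ} (hf : MemL2 f) (hg : MemL2 g) : MemL2 fun x => f x + g x :=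
  ⟨fun x => by simp only [hf.1 x, hg.1 x], hf.2.add hg.2⟩

lemma MemL2.sub {f g : ℝ → ℂ} (hf : MemL2 f) (hg : MemL2 g) : MemL2 fun x => f x - g x :=
  ⟨fun x => by simp only [hf.1 x, hg.1 x], hf.2.sub hg.2⟩

lemma memL2_const (c : ℂ) : MemL2 fun _ => c :=
  ⟨fun _ => rfl, memLp_const c⟩

lemma memL2_of_continuous {f : ℝ → ℂ} (hp : Per f) (hc : Continuous f) : MemL2 f := by
  obtain ⟨C, hC⟩ := isCompact_Icc.exists_bound_of_continuousOn
    (hc.continuousOn (s := Icc 0 (2 * π)))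
  refine ⟨hp, MemLp.of_bound hc.aestronglyMeasurable C ?_⟩
  exact (ae_restrict_iff' measurableSet_Ioc).2
    (.of_forall fun x hx => hC x (Ioc_subset_Icc_self hx))

lemma fc_zero (f : ℝ → ℂ) : fc f 0 = ∫ x in (0:ℝ)..2 * π, f x := by
  simp [fc]

lemma fc_add {f g : ℝ → ℂ} (hf : IntervalIntegrable f volume 0 (2 * π))
    (hg : IntervalIntegrable g volume 0 (2 * π)) (k : ℤ) :
    fc (fun x => f x + g x) k = fc f k + fc g k := by
  have hc : Continuous fun x : ℝ => cexp (-I * k * x) := by fun_prop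
  simp only [fc, mul_add]
  exact intervalIntegral.integral_add (hf.continuousOn_mul hc.continuousOn)
    (hg.continuousOn_mul hc.continuousOn)

lemma fc_sub {f g : ℝ → ℂ} (hf : IntervalIntegrable f volume 0 (2 * π))
    (hg : IntervalIntegrable g volume 0 (2 * π)) (k : ℤ) :
    fc (fun x => f x - g x) k = fc f k - fc g k := by
  have hc : Continuous fun x : ℝ => cexp (-I * k * x) := by fun_prop
  simp only [fc, mul_sub]
  exact intervalIntegral.integral_sub (hf.continuousOn_mul hc.continuousOn)
    (hg.continuousOn_mul hc.continuousOn)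

lemma integral_exp_neg_I_mul {k : ℤ} (hk : k ≠ 0) (t : ℝ) :
    ∫ x in t..2 * π, cexp (-I * k * x) = (I * k)⁻¹ * (cexp (-I * k * t) - 1) := by
  have hIk : I * k ≠ 0 := mul_ne_zero I_ne_zero (by exact_mod_cast hk)
  have hperiod : cexp (-I * k * (2 * π : ℝ)) = 1 := by
    rw [← exp_int_mul_two_pi_mul_I (-k)]
    push_cast
    ring_nf
  rw [integral_exp_mul_complex (by simpa using hIk), hperiod]
  field_simp
  ring

lemma fc_const (c : ℂ) {k : ℤ} (hk : k ≠ 0) : fc (fun _ => c) k = 0 := by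
  rw [fc, intervalIntegral.integral_mul_const, integral_exp_neg_I_mul hk]
  simp

/-- The period is a variable equal to `2π` so that this also applies on `AddCircle (2 * π - 0)`,
the circle on which `fourierCoeffOn` is defined. -/
lemma fourier_neg_coe_eq_exp {T : ℝ} (hT : T = 2 * π) (k : ℤ) (x : ℝ) :
    (fourier (-k) (x : AddCircle T) : ℂ) = cexp (-I * k * x) := by
  subst hT
  rw [fourier_coe_apply]
  congr 1
  have : (π : ℂ) ≠ 0 := by exact_mod_cast pi_ne_zero
  push_cast
  field_simp

lemma fc_eq_mul_fourierCoeffOn (f : ℝ → ℂ) (k : ℤ) :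
    fc f k = 2 * π * fourierCoeffOn two_pi_pos f k := by
  rw [fourierCoeffOn_eq_integral, fc]
  simp only [fourier_neg_coe_eq_exp (sub_zero _), smul_eq_mul, sub_zero, real_smul]
  push_cast
  field_simp

lemma fc_comp_coe (F : AddCircle (2 * π) → ℂ) (k : ℤ) :
    fc (fun x => F x) k = 2 * π * fourierCoeff F k := by
  rw [fourierCoeff_eq_intervalIntegral F k 0, zero_add, fc]
  simp only [fourier_neg_coe_eq_exp rfl, smul_eq_mul, real_smul]
  push_cast
  field_simp

lemma summable_sq_fc {f : ℝ → ℂ} (hf : MemL2 f) : Summable fun k => ‖fc f k‖ ^ 2 := by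
  simp only [fc_eq_mul_fourierCoeffOn, norm_mul, mul_pow]
  exact ((hasSum_sq_fourierCoeffOn two_pi_pos hf.2).summable).mul_left _

lemma exists_memL2_fc_eq {d : ℤ → ℂ} (hd : Summable fun k => ‖d k‖ ^ 2) :
    ∃ g, MemL2 g ∧ ∀ k, fc g k = d k := by
  have hd' : Memℓp (fun k => ((2 * π : ℝ) : ℂ)⁻¹ * d k) 2 := by
    refine memℓp_gen ?_
    simp only [ENNReal.toReal_ofNat, Real.rpow_two, norm_mul, mul_pow]
    exact hd.mul_left _
  obtain ⟨G, hG⟩ :=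
    (fourierBasis (T := 2 * π)).repr.surjective (⟨_, hd'⟩ : lp (fun _ : ℤ => ℂ) 2)
  refine ⟨fun x => G x, ⟨fun x => by simp, ?_⟩, fun k => ?_⟩
  · have := ((Lp.memLp G).of_haarAddCircle).comp_measurePreserving
      (AddCircle.measurePreserving_mk (2 * π) 0)
    rwa [zero_add] at this
  · rw [fc_comp_coe, ← fourierBasis_repr, hG]
    have : ((2 * π : ℝ) : ℂ) ≠ 0 := by exact_mod_cast two_pi_pos.ne'
    simp only
    push_cast at this ⊢
    field_simp

lemma integral_mul_primitive {e g : ℝ → ℂ} {a b : ℝ} (hab : a ≤ b) (he : Continuous e)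
    (hg : IntegrableOn g (Ioc a b)) :
    ∫ x in a..b, e x * ∫ t in a..x, g t = ∫ t in a..b, (∫ x in t..b, e x) * g t := by
  set μ := volume.restrict (Ioc a b)
  set F : ℝ × ℝ → ℂ := {p | p.2 ≤ p.1}.indicator fun p => e p.1 * g p.2
  have hF : Integrable F (μ.prod μ) :=
    ((he.integrableOn_Icc.mono_set Ioc_subset_Icc_self).mul_prod hg).indicator
      (measurableSet_le measurable_snd measurable_fst)
  have hL : ∀ x ∈ Ioc a b, ∫ t, F (x, t) ∂μ = e x * ∫ t in a..x, g t := by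
    intro x hx
    have hslice : (fun t => F (x, t)) = (Iic x).indicator fun t => e x * g t := by
      ext t; simp [F, Set.indicator_apply]
    rw [hslice, integral_indicator measurableSet_Iic, Measure.restrict_restrict measurableSet_Iic,
      Iic_inter_Ioc_of_le hx.2, integral_const_mul, intervalIntegral.integral_of_le hx.1.le]
  have hR : ∀ t ∈ Ioc a b, ∫ x, F (x, t) ∂μ = (∫ x in t..b, e x) * g t := by
    intro t ht
    have hslice : (fun x => F (x, t)) = (Ici t).indicator fun x => e x * g t := by
      ext x; simp [F, Set.indicator_apply]
    have hset : Ici t ∩ Ioc a b = Icc t b := by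
      ext x
      simp only [mem_inter_iff, mem_Ici, mem_Ioc, mem_Icc]
      exact ⟨fun h => ⟨h.1, h.2.2⟩, fun h => ⟨h.1, ht.1.trans_le h.1, h.2⟩⟩
    rw [hslice, integral_indicator measurableSet_Ici, Measure.restrict_restrict measurableSet_Ici,
      hset, integral_Icc_eq_integral_Ioc, integral_mul_const, intervalIntegral.integral_of_le ht.2]
  simp only [intervalIntegral.integral_of_le hab]
  rw [← setIntegral_congr_fun measurableSet_Ioc hL, ← setIntegral_congr_fun measurableSet_Ioc hR]
  exact integral_integral_swap (f := fun x t => F (x, t)) hF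

lemma fc_primitive {g : ℝ → ℂ} (hg : IntegrableOn g (Ioc 0 (2 * π))) {k : ℤ} (hk : k ≠ 0) :
    fc (fun x => ∫ t in (0:ℝ)..x, g t) k = (I * k)⁻¹ * (fc g k - fc g 0) := by
  have hgi : IntervalIntegrable g volume 0 (2 * π) :=
    (intervalIntegrable_iff_integrableOn_Ioc_of_le two_pi_pos.le).2 hg
  have hc : Continuous fun x : ℝ => cexp (-I * k * x) := by fun_prop
  rw [fc, integral_mul_primitive two_pi_pos.le hc hg, fc_zero, fc,
    ← intervalIntegral.integral_sub (hgi.continuousOn_mul hc.continuousOn) hgi,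
    ← intervalIntegral.integral_const_mul]
  refine intervalIntegral.integral_congr fun t _ => ?_
  rw [integral_exp_neg_I_mul hk]
  ring

lemma isH1_primitive {g : ℝ → ℂ} (hg : MemL2 g) (hmean : ∫ t in (0:ℝ)..2 * π, g t = 0) :
    IsH1 (fun x => ∫ t in (0:ℝ)..x, g t) g := by
  refine ⟨fun x => ?_, hg.1, hg, fun x => by simp⟩
  simp only
  rw [hg.1.intervalIntegral_add_eq_add 0 x hg.intervalIntegrable, zero_add, hmean, add_zero]

lemma memL2_primitive {g : ℝ → ℂ} (hg : MemL2 g) (hmean : ∫ t in (0:ℝ)..2 * π, g t = 0) :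
    MemL2 fun x => ∫ t in (0:ℝ)..x, g t :=
  memL2_of_continuous (isH1_primitive hg hmean).1
    (intervalIntegral.continuous_primitive hg.intervalIntegrable 0)

lemma fc_primitive_of_mean_zero {g : ℝ → ℂ} (hg : MemL2 g)
    (hmean : ∫ t in (0:ℝ)..2 * π, g t = 0) {k : ℤ} (hk : k ≠ 0) :
    fc (fun x => ∫ t in (0:ℝ)..x, g t) k = (I * k)⁻¹ * fc g k := by
  rw [fc_primitive (hg.2.integrable one_le_two) hk, fc_zero, hmean, sub_zero]

lemma intervalIntegral_sub_average {u : ℝ → ℂ} (hu : IntervalIntegrable u volume 0 (2 * π)) :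
    ∫ x in (0:ℝ)..2 * π, (u x - (((2 * π)⁻¹ : ℝ) : ℂ) * ∫ t in (0:ℝ)..2 * π, u t) = 0 := by
  rw [intervalIntegral.integral_sub hu intervalIntegrable_const, intervalIntegral.integral_const,
    real_smul]
  have : (π : ℂ) ≠ 0 := by exact_mod_cast pi_ne_zero
  push_cast
  field_simp
  ring

lemma exp_neg_I_mul_eq_cos_sub_I_mul_sin {k : ℤ} (hk : k = 1 ∨ k = -1) (x : ℝ) :
    cexp (-I * k * x) = Real.cos x - I * k * Real.sin x := by
  rw [show -I * k * x = ((-(k * x) : ℝ) : ℂ) * I by push_cast; ring, exp_mul_I, ← ofReal_cos,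
    ← ofReal_sin]
  rcases hk with rfl | rfl <;> simp <;> ring

lemma fc_add_I_mul_fc_eq_zero {f₁ f₂ : ℝ → ℂ} (h₁ : IntervalIntegrable f₁ volume 0 (2 * π))
    (h₂ : IntervalIntegrable f₂ volume 0 (2 * π))
    (o3 : ∫ x in (0:ℝ)..2 * π, (-(f₁ x) * (Real.sin x : ℂ) + f₂ x * (Real.cos x : ℂ)) = 0)
    (o4 : ∫ x in (0:ℝ)..2 * π, (f₁ x * (Real.cos x : ℂ) + f₂ x * (Real.sin x : ℂ)) = 0)
    {k : ℤ} (hk : k = 1 ∨ k = -1) :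
    fc f₁ k + I * k * fc f₂ k = 0 := by
  have hk2 : (k : ℂ) ^ 2 = 1 := by rcases hk with rfl | rfl <;> norm_num
  have hcos : Continuous fun x : ℝ => (Real.cos x : ℂ) := by fun_prop
  have hsin : Continuous fun x : ℝ => (Real.sin x : ℂ) := by fun_prop
  have hc : Continuous fun x : ℝ => cexp (-I * k * x) := by fun_prop
  have hA := (h₁.mul_continuousOn hcos.continuousOn).add (h₂.mul_continuousOn hsin.continuousOn)
  have hB : IntervalIntegrable (fun x => -(f₁ x) * (Real.sin x : ℂ) + f₂ x * Real.cos x)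
      volume 0 (2 * π) :=
    (h₁.neg.mul_continuousOn hsin.continuousOn).add (h₂.mul_continuousOn hcos.continuousOn)
  calc fc f₁ k + I * k * fc f₂ k
      = ∫ x in (0:ℝ)..2 * π, ((f₁ x * Real.cos x + f₂ x * Real.sin x)
          + I * k * (-(f₁ x) * Real.sin x + f₂ x * Real.cos x)) := by
        rw [fc, fc, ← intervalIntegral.integral_const_mul, ← intervalIntegral.integral_add
          (h₁.continuousOn_mul hc.continuousOn) ((h₂.continuousOn_mul hc.continuousOn).const_mul _)]
        refine intervalIntegral.integral_congr fun x _ => ?_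
        rw [exp_neg_I_mul_eq_cos_sub_I_mul_sin hk]
        linear_combination (-(f₂ x) * Real.sin x) * ((k : ℂ) ^ 2 * I_sq - hk2)
    _ = 0 := by
        rw [intervalIntegral.integral_add hA (hB.const_mul _), intervalIntegral.integral_const_mul,
          o3, o4]
        ring

/-- `i k V₁` for the solution `V` of the `k`-th mode, `|k| ≥ 2`: Cramer's rule gives
`k (k a + i |k| b) / (|k| (|k| - 1))`, and `|k| (|k| - 1) = k (k - sign k)`. -/
def solDerivCoeff (k : ℤ) (a b : ℂ) : ℂ :=
  if 2 ≤ |k| then (k * a + I * |k| * b) / (k - k.sign) else 0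

lemma abs_sub_sign_of_ne_zero {k : ℤ} (hk : k ≠ 0) : |k - k.sign| = |k| - 1 := by
  rcases hk.lt_or_gt with h | h
  · rw [Int.sign_eq_neg_one_of_neg h, abs_of_neg h, abs_of_nonpos (by omega : k - -1 ≤ 0)]; ring
  · rw [Int.sign_eq_one_of_pos h, abs_of_pos h, abs_of_nonneg (by omega : 0 ≤ k - 1)]

lemma norm_solDerivCoeff_le (k : ℤ) (a b : ℂ) : ‖solDerivCoeff k a b‖ ≤ 2 * (‖a‖ + ‖b‖) := by
  unfold solDerivCoeff
  split_ifs with hk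
  swap
  · simp only [norm_zero]; positivity
  have hK : (2 : ℝ) ≤ |k| := by exact_mod_cast hk
  have hden : ‖(k : ℂ) - k.sign‖ = |k| - 1 := by
    rw [← Int.cast_sub, norm_intCast, ← Int.cast_abs,
      abs_sub_sign_of_ne_zero (by rintro rfl; simp at hk)]
    push_cast; ring
  have hnum : ‖(k : ℂ) * a + I * |k| * b‖ ≤ |k| * (‖a‖ + ‖b‖) := by
    refine (norm_add_le _ _).trans_eq ?_
    simp only [norm_mul, norm_I, norm_intCast, one_mul, Int.cast_abs, abs_abs]
    ring
  rw [norm_div, hden, div_le_iff₀ (by linarith)]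
  nlinarith [norm_nonneg a, norm_nonneg b]

lemma summable_sq_solDerivCoeff {a b : ℤ → ℂ} (ha : Summable fun k => ‖a k‖ ^ 2)
    (hb : Summable fun k => ‖b k‖ ^ 2) :
    Summable fun k => ‖solDerivCoeff k (a k) (b k)‖ ^ 2 := by
  refine .of_nonneg_of_le (fun _ => sq_nonneg _) (fun k => ?_)
    ((ha.mul_left 8).add (hb.mul_left 8))
  have := pow_le_pow_left₀ (norm_nonneg _) (norm_solDerivCoeff_le k (a k) (b k)) 2
  nlinarith [sq_nonneg (‖a k‖ - ‖b k‖)]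

lemma sub_solDerivCoeff {k : ℤ} {a b : ℂ} (hk : k ≠ 0)
    (hres : k = 1 ∨ k = -1 → a + I * k * b = 0) :
    a - solDerivCoeff k a b = |k| * ((I * k)⁻¹ * (b + (I * k)⁻¹ * solDerivCoeff k a b)) := by
  have hkC : (k : ℂ) ≠ 0 := by exact_mod_cast hk
  unfold solDerivCoeff
  split_ifs with h2
  · rcases hk.lt_or_gt with h | h
    · have hden : (k : ℂ) + 1 ≠ 0 := by
        exact_mod_cast (by rw [abs_of_neg h] at h2; omega : k + 1 ≠ 0)
      rw [Int.sign_eq_neg_one_of_neg h, abs_of_neg h]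
      push_cast
      rw [sub_neg_eq_add]
      field_simp
      linear_combination (a + I * k * b) * I_sq
    · have hden : (k : ℂ) - 1 ≠ 0 := by
        exact_mod_cast (by rw [abs_of_pos h] at h2; omega : k - 1 ≠ 0)
      rw [Int.sign_eq_one_of_pos h, abs_of_pos h]
      push_cast
      field_simp
      linear_combination -(a + I * k * b) * I_sq
  · have hk1 : k = 1 ∨ k = -1 := by
      rcases abs_cases k with ⟨h, h'⟩ | ⟨h, h'⟩ <;> rw [h] at h2 <;> omega
    have hab := hres hk1
    rcases hk1 with rfl | rfl <;>
    · push_cast at hab ⊢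
      field_simp
      linear_combination -hab + a * I_sq

/-- if `f₁, f₂ ∈ L²(𝕋;ℂ)` satisfy the four orthogonality conditions,
then the system `v₁′ + |D|v₂ = f₁`, `−v₁ + (1/2π)∫₀^{2π} v₁ + v₂′ = f₂` has a solution
`(v₁, v₂) ∈ (H¹(𝕋;ℂ))²`. -/
theorem statement5 (f₁ f₂ : ℝ → ℂ) (hf₁ : MemL2 f₁) (hf₂ : MemL2 f₂)
    (o1 : (∫ x in (0:ℝ)..(2 * Real.pi), f₁ x) = 0)
    (o2 : (∫ x in (0:ℝ)..(2 * Real.pi), f₂ x) = 0)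
    (o3 : (∫ x in (0:ℝ)..(2 * Real.pi),
        (-(f₁ x) * (Real.sin x : ℂ) + f₂ x * (Real.cos x : ℂ))) = 0)
    (o4 : (∫ x in (0:ℝ)..(2 * Real.pi),
        (f₁ x * (Real.cos x : ℂ) + f₂ x * (Real.sin x : ℂ))) = 0) :
    ∃ v₁ v₂ g₁ g₂ h : ℝ → ℂ, IsH1 v₁ g₁ ∧ IsH1 v₂ g₂ ∧
      IsMult (fun k => |(k : ℝ)|) v₂ h ∧
      aeEq (fun x => g₁ x + h x) f₁ ∧
      aeEq (fun x => -v₁ x + (((2 * Real.pi)⁻¹ : ℝ) : ℂ) *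
        (∫ t in (0:ℝ)..(2 * Real.pi), v₁ t) + g₂ x) f₂ := by
  obtain ⟨g₁, hg₁, hfc₁⟩ := exists_memL2_fc_eq
    (summable_sq_solDerivCoeff (summable_sq_fc hf₁) (summable_sq_fc hf₂))
  have hmean₁ : ∫ t in (0:ℝ)..2 * π, g₁ t = 0 := by simp [← fc_zero, hfc₁, solDerivCoeff]
  set v₁ : ℝ → ℂ := fun x => ∫ t in (0:ℝ)..x, g₁ t
  have hv₁ : MemL2 v₁ := memL2_primitive hg₁ hmean₁
  set C : ℂ := (((2 * π)⁻¹ : ℝ) : ℂ) * ∫ t in (0:ℝ)..2 * π, v₁ t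
  set g₂ : ℝ → ℂ := fun x => f₂ x + (v₁ x - C)
  have hg₂ : MemL2 g₂ := hf₂.add (hv₁.sub (memL2_const C))
  have hmean₂ : ∫ t in (0:ℝ)..2 * π, g₂ t = 0 := by
    rw [intervalIntegral.integral_add (hf₂.intervalIntegrable _ _)
      ((hv₁.sub (memL2_const C)).intervalIntegrable _ _), o2,
      intervalIntegral_sub_average (hv₁.intervalIntegrable _ _), add_zero]
  refine ⟨v₁, fun x => ∫ t in (0:ℝ)..x, g₂ t, g₁, g₂, fun x => f₁ x - g₁ x,
    isH1_primitive hg₁ hmean₁, isH1_primitive hg₂ hmean₂, ⟨hf₁.sub hg₁, fun k => ?_⟩,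
    .of_forall fun x => by simp, .of_forall fun x => by simp only [g₂]; ring⟩
  rw [fc_sub (hf₁.intervalIntegrable _ _) (hg₁.intervalIntegrable _ _), hfc₁]
  rcases eq_or_ne k 0 with rfl | hk
  · simp [fc_zero, o1, solDerivCoeff]
  have hfc₂ : fc g₂ k = fc f₂ k + fc v₁ k := by
    rw [fc_add (hf₂.intervalIntegrable _ _) ((hv₁.sub (memL2_const C)).intervalIntegrable _ _),
      fc_sub (hv₁.intervalIntegrable _ _) intervalIntegrable_const, fc_const C hk, sub_zero]
  rw [fc_primitive_of_mean_zero hg₂ hmean₂ hk, hfc₂, fc_primitive_of_mean_zero hg₁ hmean₁ hk, hfc₁,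
    sub_solDerivCoeff hk (fc_add_I_mul_fc_eq_zero (hf₁.intervalIntegrable _ _)
      (hf₂.intervalIntegrable _ _) o3 o4)]
  simp only [← Int.cast_abs, ofReal_intCast]
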